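/- If the optimal reward is strictly positive, i.e. max_{s ∈ {1,...,M+1}} E(s) > 0, then the set of optimal thresholds { s ∈ {1,...,M+1} : E(s) ≥ E(t) for all t ∈ {1,...,M+1} } has at most two elements. -/

import Mathlib

/-!
Write `E(s) = N(s) / (s + (1 - p)/p)`. From `s` to `s + 1` the denominator grows by `1` and the
numerator by `x(s) = p · D(s+1)`, where `D(s) = ∑ᵢ U(s+i)(1-p)^i` is the discounted tail. So
`E(s+1)` is a weighted average of `E(s)` and `x(s)`, and `E(s+1) ≤ E(s)` iff `x(s) ≤ E(s)`.
As `U` decreases to `U(M) = 0`, `x` is nonincreasing and strictly decreasing while positive.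
Hence once `E` stops increasing it never increases again, and it cannot stay flat for two
steps at a positive level: `E(s+1) = E(s) > 0` forces `x(s) = E(s)`, so `x(s+1) < E(s+1)` and
`E(s+2) < E(s+1)`. Optimal thresholds with positive value are therefore consecutive, and the
inactive policy `M + 1`, of value `0`, is not among them.
-/

open Finset

/-- Expected average reward `E(s)` of the threshold-`s` policy, for `1 ≤ s ≤ M`;
`E(M+1) = 0` corresponds to the always-inactive policy. -/
noncomputable def Ereward (M : ℕ) (p G P B : ℝ) (U : ℕ → ℝ) (s : ℕ) : ℝ :=
  if s = M + 1 then 0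
  else ((s : ℝ) + (1 - p) / p)⁻¹ *
    ((∑ x ∈ Finset.Icc 1 (s - 1), U x)
      + (∑ i ∈ Finset.range (M - s), U (s + i) * (1 - p) ^ i)
      - G / p - P + B)

theorem Set.ncard_le_two_of_forall_le_add_one {S : Set ℕ}
    (h : ∀ a ∈ S, ∀ b ∈ S, a ≤ b → b ≤ a + 1) : S.ncard ≤ 2 := by
  rcases S.eq_empty_or_nonempty with rfl | hne
  · simp
  have hsub : S ⊆ Set.Icc (sInf S) (sInf S + 1) := fun b hb =>
    ⟨Nat.sInf_le hb, h _ (Nat.sInf_mem hne) b hb (Nat.sInf_le hb)⟩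
  calc S.ncard ≤ (Set.Icc (sInf S) (sInf S + 1)).ncard :=
        Set.ncard_le_ncard hsub (Set.finite_Icc _ _)
    _ = 2 := by simp only [Set.ncard_Icc_nat]; omega

theorem le_add_one_of_isMaxOn {α : Type*} [LinearOrder α] [Zero α] {f : ℕ → α}
    {lo hi a b : ℕ}
    (hdec : ∀ s, lo ≤ s → s + 2 ≤ hi → f (s + 1) ≤ f s → f (s + 2) ≤ f (s + 1))
    (hflat : ∀ s, lo ≤ s → s + 2 ≤ hi → f (s + 1) = f s → 0 < f s → f (s + 2) < f (s + 1))
    (ha : a ∈ Set.Icc lo hi) (hb : b ∈ Set.Icc lo hi)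
    (hfa : IsMaxOn f (Set.Icc lo hi) a) (hfb : IsMaxOn f (Set.Icc lo hi) b)
    (hpos : 0 < f a) (hab : a ≤ b) : b ≤ a + 1 := by
  by_contra! hba
  have hloa := ha.1
  have hbhi := hb.2
  have hfa' := isMaxOn_iff.mp hfa
  have hstep : ∀ s, a ≤ s → s + 1 ≤ hi → f (s + 1) ≤ f s := by
    intro s has
    induction s, has using Nat.le_induction with
    | base => exact fun h => hfa' _ ⟨by omega, h⟩
    | succ s has ih => exact fun h => hdec s (by omega) h (ih (by omega))
  have hanti : AntitoneOn f (Set.Icc a hi) :=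
    antitoneOn_of_add_one_le Set.ordConnected_Icc
      fun s _ hs hs1 => hstep s hs.1 hs1.2
  have hfb_le : f b ≤ f (a + 2) :=
    hanti ⟨by omega, by omega⟩ ⟨by omega, hbhi⟩ (by omega)
  have hflat_a : f (a + 1) = f a :=
    le_antisymm (hstep a le_rfl (by omega)) <| calc
      f a ≤ f b := isMaxOn_iff.mp hfb a ha
      _ ≤ f (a + 2) := hfb_le
      _ ≤ f (a + 1) := hstep (a + 1) (by omega) (by omega)
  have hdrop := hflat a ha.1 (by omega) hflat_a hpos
  have hfab := isMaxOn_iff.mp hfb a ha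
  order

def IsRunningAverage (E w x : ℕ → ℝ) (lo hi : ℕ) : Prop :=
  ∀ s, lo ≤ s → s < hi → 0 ≤ w s ∧ (w s + 1) * E (s + 1) = w s * E s + x s

namespace IsRunningAverage

variable {E w x : ℕ → ℝ} {lo hi s : ℕ}

theorem succ_succ_le (hE : IsRunningAverage E w x lo hi) (hs : lo ≤ s) (hsi : s + 2 ≤ hi)
    (hx : x (s + 1) ≤ x s) (h : E (s + 1) ≤ E s) : E (s + 2) ≤ E (s + 1) := by
  obtain ⟨hw₀, hE₀⟩ := hE s hs (by omega)
  obtain ⟨hw₁, hE₁⟩ := hE (s + 1) (by omega) (by omega)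
  have hxE : x s ≤ E s := by nlinarith
  have hxE₁ : x s ≤ E (s + 1) := by nlinarith
  nlinarith

theorem succ_succ_lt (hE : IsRunningAverage E w x lo hi) (hs : lo ≤ s) (hsi : s + 2 ≤ hi)
    (hx : 0 < x s → x (s + 1) < x s) (h : E (s + 1) = E s) (hpos : 0 < E s) :
    E (s + 2) < E (s + 1) := by
  obtain ⟨hw₀, hE₀⟩ := hE s hs (by omega)
  obtain ⟨hw₁, hE₁⟩ := hE (s + 1) (by omega) (by omega)
  have hxE : x s = E s := by nlinarith
  have := hx (hxE ▸ hpos)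
  nlinarith

theorem le_add_one_of_isMaxOn (hE : IsRunningAverage E w x lo hi)
    (hx : ∀ s, lo ≤ s → s + 2 ≤ hi → x (s + 1) ≤ x s)
    (hx_lt : ∀ s, lo ≤ s → s + 2 ≤ hi → 0 < x s → x (s + 1) < x s) {a b : ℕ}
    (ha : a ∈ Set.Icc lo hi) (hb : b ∈ Set.Icc lo hi)
    (hfa : IsMaxOn E (Set.Icc lo hi) a) (hfb : IsMaxOn E (Set.Icc lo hi) b)
    (hpos : 0 < E a) (hab : a ≤ b) : b ≤ a + 1 :=
  _root_.le_add_one_of_isMaxOn (fun s hs hsi => hE.succ_succ_le hs hsi (hx s hs hsi))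
    (fun s hs hsi => hE.succ_succ_lt hs hsi (hx_lt s hs hsi)) ha hb hfa hfb hpos hab

end IsRunningAverage

noncomputable def discountedTail (M : ℕ) (p : ℝ) (U : ℕ → ℝ) (s : ℕ) : ℝ :=
  ∑ i ∈ range (M - s), U (s + i) * (1 - p) ^ i

section discountedTail

variable {M : ℕ} {p : ℝ} {U : ℕ → ℝ} {s : ℕ}

theorem discountedTail_eq_add (hs : s < M) :
    discountedTail M p U s = U s + (1 - p) * discountedTail M p U (s + 1) := by
  obtain ⟨n, hn⟩ : ∃ n, M - s = n + 1 := ⟨M - s - 1, by omega⟩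
  rw [discountedTail, discountedTail, hn, show M - (s + 1) = n by omega, sum_range_succ',
    mul_sum]
  simp only [add_zero, pow_zero, mul_one, pow_succ]
  rw [add_comm]
  congr 1
  refine sum_congr rfl fun i _ => ?_
  rw [show s + (i + 1) = s + 1 + i by omega]
  ring

variable (hU : ∀ ⦃x y : ℕ⦄, 1 ≤ x → x ≤ y → y ≤ M → U y ≤ U x)
include hU

theorem mul_discountedTail_le (hp : 0 < p) (hp1 : p ≤ 1) (hs : 1 ≤ s) :
    p * discountedTail M p U s ≤ U s * (1 - (1 - p) ^ (M - s)) := by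
  have hgeom : p * ∑ i ∈ range (M - s), (1 - p) ^ i = 1 - (1 - p) ^ (M - s) := by
    simpa only [sub_sub_cancel] using mul_neg_geom_sum (1 - p) (M - s)
  calc p * discountedTail M p U s
      ≤ p * ∑ i ∈ range (M - s), U s * (1 - p) ^ i := by
        refine mul_le_mul_of_nonneg_left (sum_le_sum fun i hi => ?_) hp.le
        have := mem_range.mp hi
        exact mul_le_mul_of_nonneg_right (hU hs (by omega) (by omega)) (pow_nonneg (by linarith) i)
    _ = U s * (1 - (1 - p) ^ (M - s)) := by rw [← mul_sum, ← hgeom]; ring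

theorem mul_discountedTail_lt (hp : 0 < p) (hp1 : p < 1) (hs : 1 ≤ s)
    (hpos : 0 < discountedTail M p U s) : p * discountedTail M p U s < U s := by
  have hbound := mul_discountedTail_le hU hp hp1.le hs
  have hq : 0 < (1 - p) ^ (M - s) := pow_pos (by linarith) _
  have hq1 : (1 - p) ^ (M - s) ≤ 1 := pow_le_one₀ (by linarith) (by linarith)
  have hUs : 0 < U s := by
    by_contra! h
    nlinarith [mul_pos hp hpos]
  nlinarith

theorem discountedTail_succ_lt (hp : 0 < p) (hp1 : p < 1) (hs : 1 ≤ s) (hsM : s < M)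
    (hpos : 0 < discountedTail M p U s) :
    discountedTail M p U (s + 1) < discountedTail M p U s := by
  rcases le_or_gt (discountedTail M p U (s + 1)) 0 with hD₁ | hD₁
  · linarith
  have hlt := mul_discountedTail_lt hU hp hp1 (by omega) hD₁
  have hUs : U (s + 1) ≤ U s := hU hs (by omega) hsM
  rw [discountedTail_eq_add hsM]
  linarith

theorem discountedTail_succ_le (hUM : U M = 0) (hp : 0 < p) (hp1 : p ≤ 1) (hs : 1 ≤ s)
    (hsM : s < M) :
    discountedTail M p U (s + 1) ≤ discountedTail M p U s := by
  have hbound := mul_discountedTail_le hU hp hp1 (s := s + 1) (by omega)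
  have hU₁ : 0 ≤ U (s + 1) := hUM ▸ hU (by omega) hsM le_rfl
  have hUs : U (s + 1) ≤ U s := hU hs (by omega) hsM
  have hq : 0 ≤ (1 - p) ^ (M - (s + 1)) := pow_nonneg (by linarith) _
  rw [discountedTail_eq_add hsM]
  nlinarith

end discountedTail

theorem Ereward_isRunningAverage {M : ℕ} {p : ℝ} (G P B : ℝ) (U : ℕ → ℝ) (hp : 0 < p) :
    IsRunningAverage (Ereward M p G P B U) (fun s => s + (1 - p) / p)
      (fun s => p * discountedTail M p U (s + 1)) 1 M := by
  intro s hs hsM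
  have hw : 0 < (s : ℝ) + (1 - p) / p := by
    rw [sub_div, div_self hp.ne']
    have : (1 : ℝ) ≤ s := by exact_mod_cast hs
    linarith [one_div_pos.mpr hp]
  refine ⟨hw.le, ?_⟩
  have hIcc : ∑ x ∈ Icc 1 (s + 1 - 1), U x = ∑ x ∈ Icc 1 (s - 1), U x + U s := by
    rw [Nat.add_sub_cancel, ← Nat.sub_add_cancel hs]
    exact sum_Icc_succ_top (by omega) U
  have hD := discountedTail_eq_add (p := p) (U := U) hsM
  unfold discountedTail at hD ⊢
  simp only [Ereward, if_neg (show s ≠ M + 1 by omega), if_neg (show s + 1 ≠ M + 1 by omega),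
    Nat.cast_add, Nat.cast_one, add_right_comm _ (1 : ℝ), hIcc, hD]
  rw [mul_inv_cancel_left₀ (add_pos hw one_pos).ne', mul_inv_cancel_left₀ hw.ne']
  ring

theorem at_most_two_optimal_thresholds_general (M : ℕ) (p G P B : ℝ) (U : ℕ → ℝ)
    (hp : 0 < p) (hp1 : p < 1)
    (hU : ∀ ⦃x y : ℕ⦄, 1 ≤ x → x ≤ y → y ≤ M → U y ≤ U x)
    (hUM : U M = 0)
    (hpos : ∃ s ∈ Set.Icc 1 (M + 1), 0 < Ereward M p G P B U s) :
    {s : ℕ | s ∈ Set.Icc 1 (M + 1) ∧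
      ∀ t ∈ Set.Icc 1 (M + 1),
        Ereward M p G P B U t ≤ Ereward M p G P B U s}.ncard ≤ 2 := by
  set E := Ereward M p G P B U
  obtain ⟨s₀, hs₀, hE₀⟩ := hpos
  have hopt : ∀ a ∈ Set.Icc 1 (M + 1), (∀ t ∈ Set.Icc 1 (M + 1), E t ≤ E a) →
      a ∈ Set.Icc 1 M ∧ IsMaxOn E (Set.Icc 1 M) a ∧ 0 < E a := by
    rintro a ⟨ha₁, haM₁⟩ hmax
    have hEa : 0 < E a := hE₀.trans_le (hmax s₀ hs₀)
    have haM : a ≤ M := by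
      by_contra! h
      simp [E, Ereward, show a = M + 1 by omega] at hEa
    exact ⟨⟨ha₁, haM⟩, isMaxOn_iff.mpr fun t ht => hmax t ⟨ht.1, ht.2.trans (by omega)⟩, hEa⟩
  refine Set.ncard_le_two_of_forall_le_add_one fun a ha b hb hab => ?_
  obtain ⟨ha, hfa, hEa⟩ := hopt a ha.1 ha.2
  obtain ⟨hb, hfb, -⟩ := hopt b hb.1 hb.2
  exact (Ereward_isRunningAverage G P B U hp).le_add_one_of_isMaxOn
    (fun s hs hsM => mul_le_mul_of_nonneg_left
      (discountedTail_succ_le hU hUM hp hp1.le (by omega) (by omega)) hp.le)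
    (fun s hs hsM hx => mul_lt_mul_of_pos_left
      (discountedTail_succ_lt hU hp hp1 (by omega) (by omega) (pos_of_mul_pos_right hx hp.le)) hp)
    ha hb hfa hfb hEa hab

/-- If the optimal reward is strictly positive, then there are at most two optimal
thresholds. -/
theorem at_most_two_optimal_thresholds (M : ℕ) (p G P B : ℝ) (U : ℕ → ℝ)
    (hM : 2 ≤ M) (hp : 0 < p) (hp1 : p < 1)
    (hU : ∀ ⦃x y : ℕ⦄, 1 ≤ x → x ≤ y → y ≤ M → U y ≤ U x)
    (hUM : U M = 0)
    (hpos : ∃ s ∈ Set.Icc 1 (M + 1), 0 < Ereward M p G P B U s) :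
    {s : ℕ | s ∈ Set.Icc 1 (M + 1) ∧
      ∀ t ∈ Set.Icc 1 (M + 1),
        Ereward M p G P B U t ≤ Ereward M p G P B U s}.ncard ≤ 2 :=
  at_most_two_optimal_thresholds_general M p G P B U hp hp1 hU hUM hpos
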